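/- Let k be a positive integer and let G = (S,K,R) be a spider with nonempty head R. Then G is not a minimal (1,k)-polar obstruction. -/

import Mathlib

open SimpleGraph

universe u v

/-! ### Basic predicates -/

/-- `B` induces a disjoint union of complete graphs in `G` (i.e. `G[B]` is a cluster). -/
def IsClusterSet {V : Type*} (G : SimpleGraph V) (B : Set V) : Prop :=
  ∀ ⦃u w x : V⦄, u ∈ B → w ∈ B → x ∈ B → G.Adj u w → G.Adj w x → u ≠ x → G.Adj u x

/-- `A` induces a complete multipartite graph in `G`
(the complement of `G[A]` is a disjoint union of cliques). -/
def IsCompleteMultipartiteSet {V : Type*} (G : SimpleGraph V) (A : Set V) : Prop :=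
  ∀ ⦃u w x : V⦄, u ∈ A → w ∈ A → x ∈ A → u ≠ w → w ≠ x → u ≠ x →
    ¬ G.Adj u w → ¬ G.Adj w x → ¬ G.Adj u x

/-- `A` is an independent set of `G`. -/
def IsIndepSet {V : Type*} (G : SimpleGraph V) (A : Set V) : Prop :=
  ∀ ⦃u w : V⦄, u ∈ A → w ∈ A → ¬ G.Adj u w

/-- `G[B]` is a disjoint union of at most `k` complete graphs. -/
def IsClusterSetLE {V : Type*} (G : SimpleGraph V) (k : ℕ) (B : Set V) : Prop :=
  ∃ g : B → Fin k, ∀ u w : B, u ≠ w → (G.Adj u w ↔ g u = g w)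

/-- `G[A]` is a complete multipartite graph with at most `s` parts. -/
def IsCompleteMultipartiteSetLE {V : Type*} (G : SimpleGraph V) (s : ℕ) (A : Set V) : Prop :=
  ∃ f : A → Fin s, ∀ u w : A, G.Adj u w ↔ f u ≠ f w

/-! ### Polarity properties -/

/-- `G` is unipolar: a partition `(A, Aᶜ)` with `A` a clique and `G[Aᶜ]` a cluster. -/
def Unipolar {V : Type*} (G : SimpleGraph V) : Prop :=
  ∃ A : Set V, G.IsClique A ∧ IsClusterSet G Aᶜ

/-- `G` is monopolar ((1,∞)-polar). -/
def Monopolar {V : Type*} (G : SimpleGraph V) : Prop :=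
  ∃ A : Set V, _root_.IsIndepSet G A ∧ IsClusterSet G Aᶜ

/-- `G` is polar ((∞,∞)-polar). -/
def Polar {V : Type*} (G : SimpleGraph V) : Prop :=
  ∃ A : Set V, IsCompleteMultipartiteSet G A ∧ IsClusterSet G Aᶜ

/-- `G` is (s,1)-polar. -/
def SOnePolar {V : Type*} (s : ℕ) (G : SimpleGraph V) : Prop :=
  ∃ A : Set V, IsCompleteMultipartiteSetLE G s A ∧ G.IsClique Aᶜ

/-- `G` is (∞,1)-polar. -/
def InfOnePolar {V : Type*} (G : SimpleGraph V) : Prop :=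
  ∃ A : Set V, IsCompleteMultipartiteSet G A ∧ G.IsClique Aᶜ

/-- `G` is (1,k)-polar. -/
def OneKPolar {V : Type*} (k : ℕ) (G : SimpleGraph V) : Prop :=
  ∃ A : Set V, _root_.IsIndepSet G A ∧ IsClusterSetLE G k Aᶜ

/-! ### Minimal obstructions -/

def MinUnipolarObstruction {V : Type*} (G : SimpleGraph V) : Prop :=
  ¬ Unipolar G ∧ ∀ s : Set V, s ≠ Set.univ → Unipolar (G.induce s)

def MinMonopolarObstruction {V : Type*} (G : SimpleGraph V) : Prop :=
  ¬ Monopolar G ∧ ∀ s : Set V, s ≠ Set.univ → Monopolar (G.induce s)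

def MinPolarObstruction {V : Type*} (G : SimpleGraph V) : Prop :=
  ¬ Polar G ∧ ∀ s : Set V, s ≠ Set.univ → Polar (G.induce s)

def MinSOnePolarObstruction {V : Type*} (s : ℕ) (G : SimpleGraph V) : Prop :=
  ¬ SOnePolar s G ∧ ∀ t : Set V, t ≠ Set.univ → SOnePolar s (G.induce t)

def MinInfOnePolarObstruction {V : Type*} (G : SimpleGraph V) : Prop :=
  ¬ InfOnePolar G ∧ ∀ t : Set V, t ≠ Set.univ → InfOnePolar (G.induce t)

def MinOneKPolarObstruction {V : Type*} (k : ℕ) (G : SimpleGraph V) : Prop :=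
  ¬ OneKPolar k G ∧ ∀ t : Set V, t ≠ Set.univ → OneKPolar k (G.induce t)

/-! ### Graph constructions -/

/-- The join of two graphs: all edges added between the summands. -/
def joinG {α β : Type*} (G : SimpleGraph α) (H : SimpleGraph β) : SimpleGraph (α ⊕ β) where
  Adj x y := (G ⊕g H).Adj x y ∨ (x.isLeft ∧ y.isRight) ∨ (x.isRight ∧ y.isLeft)
  symm := ⟨fun x y h => by
    rcases h with h | ⟨h1, h2⟩ | ⟨h1, h2⟩
    · exact Or.inl (h.symm)
    · exact Or.inr (Or.inr ⟨h2, h1⟩)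
    · exact Or.inr (Or.inl ⟨h2, h1⟩)⟩
  loopless := ⟨fun x h => by
    rcases h with h | ⟨h1, h2⟩ | ⟨h1, h2⟩
    · exact (G ⊕g H).loopless.irrefl x h
    · cases x <;> simp_all
    · cases x <;> simp_all⟩

/-- `K_n`, the complete graph on `n` vertices. -/
def KG (n : ℕ) : SimpleGraph (Fin n) := ⊤

/-- `n K_1`, the edgeless graph on `n` vertices. -/
def EG (n : ℕ) : SimpleGraph (Fin n) := ⊥

/-- The banner graph `P`: a four-cycle `0 1 2 3` with a pendant vertex `4` adjacent to `0`. -/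
def banner : SimpleGraph (Fin 5) :=
  SimpleGraph.fromEdgeSet {s(0, 1), s(1, 2), s(2, 3), s(3, 0), s(0, 4)}

/-- The chair (fork) graph `F`: a path `0 1 2 3` with an extra vertex `4` adjacent to `1`. -/
def chair : SimpleGraph (Fin 5) :=
  SimpleGraph.fromEdgeSet {s(0, 1), s(1, 2), s(2, 3), s(1, 4)}

/-- `2P_3`. -/
def twoP3 : SimpleGraph (Fin 3 ⊕ Fin 3) := pathGraph 3 ⊕g pathGraph 3

/-- `K_{2,3}`. -/
def K23 : SimpleGraph (Fin 2 ⊕ Fin 3) := completeBipartiteGraph (Fin 2) (Fin 3)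

/-- The seven graphs `E1, E2, E3, E7, E10, E11, E12`. -/
def E1 : SimpleGraph (Fin 1 ⊕ (Fin 2 ⊕ Fin 2)) := KG 1 ⊕g (KG 2 ⊕g KG 2)
def E2 : SimpleGraph (Fin 3 ⊕ Fin 3) := pathGraph 3 ⊕g pathGraph 3
def E3 : SimpleGraph (Fin 4 ⊕ Fin 2) := cycleGraph 4 ⊕g EG 2
def E7 : SimpleGraph (Fin 1 ⊕ (Fin 3 ⊕ Fin 2)) := KG 1 ⊕g (pathGraph 3 ⊕g KG 2)ᶜ
def E10 : SimpleGraph (Fin 1 ⊕ Fin 5) := KG 1 ⊕g cycleGraph 5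
def E11 : SimpleGraph (Fin 1 ⊕ Fin 5) := KG 1 ⊕g banner
def E12 : SimpleGraph (Fin 1 ⊕ Fin 5) := KG 1 ⊕g (pathGraph 5)ᶜ

/-! ### P4 structure -/

/-- `W` induces a path on four vertices in `G`. -/
def InducesP4 {V : Type*} (G : SimpleGraph V) (W : Set V) : Prop :=
  Nonempty (G.induce W ≃g pathGraph 4)

/-- A graph is a cograph if it has no induced `P_4`. -/
def Cograph {V : Type*} (G : SimpleGraph V) : Prop :=
  ∀ W : Set V, ¬ InducesP4 G W

/-- `G` is `P_4`-sparse: any five vertices induce at most one `P_4`. -/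
def P4Sparse {V : Type*} (G : SimpleGraph V) : Prop :=
  ∀ s : Set V, s.ncard = 5 → ∀ W₁ W₂ : Set V, W₁ ⊆ s → W₂ ⊆ s →
    InducesP4 G W₁ → InducesP4 G W₂ → W₁ = W₂

/-- `G` is `P_4`-extendible. -/
def P4Extendible {V : Type*} (G : SimpleGraph V) : Prop :=
  ∀ W : Set V, InducesP4 G W →
    ∀ v₁ v₂ : V, v₁ ∉ W → v₂ ∉ W →
      (∃ W₁ : Set V, InducesP4 G W₁ ∧ v₁ ∈ W₁ ∧ (W₁ ∩ W).Nonempty) →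
      (∃ W₂ : Set V, InducesP4 G W₂ ∧ v₂ ∈ W₂ ∧ (W₂ ∩ W).Nonempty) → v₁ = v₂

/-! ### Spiders -/

/-- `(S, K, R)` is a spider partition of `G`. -/
def IsSpiderPartition {V : Type*} (G : SimpleGraph V) (S K R : Set V) : Prop :=
  S ∪ K ∪ R = Set.univ ∧ Disjoint S K ∧ Disjoint S R ∧ Disjoint K R ∧
  S.ncard = K.ncard ∧ 2 ≤ K.ncard ∧
  G.IsClique K ∧ _root_.IsIndepSet G S ∧
  (∃ f : S → K, Function.Bijective f ∧
    ((∀ s : S, ∀ k : K, G.Adj s k ↔ (f s : V) = k) ∨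
     (∀ s : S, ∀ k : K, G.Adj s k ↔ (f s : V) ≠ k))) ∧
  (∀ r ∈ R, ∀ k ∈ K, G.Adj r k) ∧
  (∀ r ∈ R, ∀ s ∈ S, ¬ G.Adj r s)

/-- `G` is a `B`-spider with partition `(S, K, R)`, where `B` is a fixed base graph with
midpoint set `M` and endpoint set `E`: `G` is obtained from a copy of `B` (whose midpoints
form `K` and whose endpoints form `S`) by adding the set `R` of vertices, each adjacent to
all midpoints and to no endpoint. -/
def IsBaseSpider {n : ℕ} {V : Type*} (B : SimpleGraph (Fin n)) (M E : Set (Fin n))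
    (G : SimpleGraph V) (S K R : Set V) : Prop :=
  ∃ f : Fin n → V, Function.Injective f ∧
    (∀ i j : Fin n, G.Adj (f i) (f j) ↔ B.Adj i j) ∧
    K = f '' M ∧ S = f '' E ∧ R = (Set.range f)ᶜ ∧
    (∀ r ∈ R, ∀ x ∈ K, G.Adj r x) ∧
    (∀ r ∈ R, ∀ x ∈ S, ¬ G.Adj r x)

/-!
Delete one foot `s₀ ∈ S`. A (1,k)-polar partition `(A, B)` of `G - s₀` cannot put two vertices of
the clique `K` into the independent set `A`, so some `c ∈ K` lies in `B`. Every vertex of `R ∩ B` is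
adjacent to `c`, hence lies in the complete component of `G[B]` containing `c`; thus
`K ∪ (R ∩ B)` is a clique. Its complement `S ∪ (R ∩ A)` is independent, because `R` is
anticomplete to `S`. So `G` is even (1,1)-polar.
-/

section

variable {V : Type*} {G : SimpleGraph V}

lemma IsClusterSet.mono {B C : Set V} (hB : IsClusterSet G B) (hCB : C ⊆ B) :
    IsClusterSet G C :=
  fun _ _ _ hu hw hx => hB (hCB hu) (hCB hw) (hCB hx)

lemma IsClusterSetLE.isClusterSet {k : ℕ} {B : Set V} (hB : IsClusterSetLE G k B) :
    IsClusterSet G B := by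
  obtain ⟨g, hg⟩ := hB
  intro u w x hu hw hx huw hwx hux
  have h₁ := (hg ⟨u, hu⟩ ⟨w, hw⟩ (fun h => G.ne_of_adj huw (congrArg Subtype.val h))).mp huw
  have h₂ := (hg ⟨w, hw⟩ ⟨x, hx⟩ (fun h => G.ne_of_adj hwx (congrArg Subtype.val h))).mp hwx
  exact (hg ⟨u, hu⟩ ⟨x, hx⟩ (fun h => hux (congrArg Subtype.val h))).mpr (h₁.trans h₂)

lemma IsClusterSet.of_induce_compl {t : Set V} {A : Set t}
    (hA : IsClusterSet (G.induce t) Aᶜ) : IsClusterSet G (t \ Subtype.val '' A) := by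
  have hmem : ∀ v ∈ t \ Subtype.val '' A, ∃ v' ∈ Aᶜ, v'.val = v := by
    rintro v ⟨hvt, hvA⟩
    exact ⟨⟨v, hvt⟩, fun h => hvA ⟨_, h, rfl⟩, rfl⟩
  intro u w x hu hw hx huw hwx hux
  obtain ⟨u', hu', rfl⟩ := hmem u hu
  obtain ⟨w', hw', rfl⟩ := hmem w hw
  obtain ⟨x', hx', rfl⟩ := hmem x hx
  exact hA hu' hw' hx' huw hwx (fun h => hux (congrArg Subtype.val h))

lemma OneKPolar.exists_isIndepSet_isClusterSet_diff {k : ℕ} {t : Set V}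
    (h : OneKPolar k (G.induce t)) :
    ∃ A : Set V, _root_.IsIndepSet G A ∧ IsClusterSet G (t \ A) := by
  obtain ⟨A, hA, hcluster⟩ := h
  refine ⟨Subtype.val '' A, ?_, hcluster.isClusterSet.of_induce_compl⟩
  rintro _ _ ⟨u, hu, rfl⟩ ⟨w, hw, rfl⟩ huw
  exact hA hu hw huw

lemma oneKPolar_of_isClique_compl {k : ℕ} (hk : 1 ≤ k) {A : Set V}
    (hA : _root_.IsIndepSet G A) (hAc : G.IsClique Aᶜ) : OneKPolar k G :=
  ⟨A, hA, fun _ => ⟨0, hk⟩, fun u w huw =>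
    ⟨fun _ => rfl, fun _ => hAc u.2 w.2 (fun h => huw (Subtype.ext h))⟩⟩

lemma IsIndepSet.exists_mem_diff_of_isClique {A K : Set V} (hA : _root_.IsIndepSet G A)
    (hK : G.IsClique K) (hK2 : 2 ≤ K.ncard) : ∃ c ∈ K, c ∉ A := by
  obtain ⟨a, ha, b, hb, hab⟩ :=
    (Set.one_lt_ncard (Set.finite_of_ncard_pos (by omega))).mp (by omega : 1 < K.ncard)
  by_contra! hKA
  exact hA (hKA a ha) (hKA b hb) (hK ha hb hab)

lemma oneKPolar_of_spider_of_cluster {k : ℕ} (hk : 1 ≤ k) {S K R A : Set V}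
    (hcover : S ∪ K ∪ R = Set.univ) (hS : _root_.IsIndepSet G S) (hK : G.IsClique K)
    (hK2 : 2 ≤ K.ncard) (hRK : ∀ r ∈ R, ∀ x ∈ K, G.Adj r x)
    (hRS : ∀ r ∈ R, ∀ s ∈ S, ¬ G.Adj r s) (hA : _root_.IsIndepSet G A)
    (hcluster : IsClusterSet G ((K ∪ R) \ A)) : OneKPolar k G := by
  obtain ⟨c, hcK, hcA⟩ := hA.exists_mem_diff_of_isClique hK hK2
  have hindep : _root_.IsIndepSet G (S ∪ (R ∩ A)) := by
    rintro u w (hu | ⟨huR, huA⟩) (hw | ⟨hwR, hwA⟩) huw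
    exacts [hS hu hw huw, hRS w hwR u hu huw.symm, hRS u huR w hw huw, hA huA hwA huw]
  have hclique : G.IsClique (K ∪ (R \ A)) := by
    rintro u (hu | ⟨huR, huA⟩) w (hw | ⟨hwR, hwA⟩) huw
    · exact hK hu hw huw
    · exact (hRK w hwR u hu).symm
    · exact hRK u huR w hw
    · exact hcluster ⟨Or.inr huR, huA⟩ ⟨Or.inl hcK, hcA⟩ ⟨Or.inr hwR, hwA⟩
        (hRK u huR c hcK) (hRK w hwR c hcK).symm huw
  refine oneKPolar_of_isClique_compl hk hindep (hclique.subset fun v hv => ?_)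
  have hv' : v ∈ S ∪ K ∪ R := hcover ▸ Set.mem_univ v
  simp only [Set.mem_compl_iff, Set.mem_union, Set.mem_inter_iff, not_or, not_and] at hv
  rcases hv' with (hvS | hvK) | hvR
  exacts [absurd hvS hv.1, Or.inl hvK, Or.inr ⟨hvR, hv.2 hvR⟩]

end

theorem stmt_12_general {V : Type*} (k : ℕ) (hk : 1 ≤ k) (G : SimpleGraph V)
    (S K R : Set V) (h : IsSpiderPartition G S K R) :
    ¬ MinOneKPolarObstruction k G := by
  rintro ⟨hnot, hmin⟩
  obtain ⟨hcover, hSK, hSR, -, hcard, hK2, hKclique, hSindep, -, hRK, hRS⟩ := h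
  obtain ⟨s₀, hs₀⟩ : S.Nonempty := Set.nonempty_of_ncard_ne_zero (by omega)
  have hKR : K ∪ R ⊆ {s₀}ᶜ := by
    rintro v (hv | hv) rfl
    exacts [hSK.notMem_of_mem_left hs₀ hv, hSR.notMem_of_mem_left hs₀ hv]
  obtain ⟨A, hAindep, hcluster⟩ :=
    (hmin _ (Set.compl_ne_univ.mpr (Set.singleton_nonempty s₀))).exists_isIndepSet_isClusterSet_diff
  exact hnot (oneKPolar_of_spider_of_cluster hk hcover hSindep hKclique (by omega) hRK hRS
    hAindep (hcluster.mono (Set.sdiff_subset_sdiff_left hKR)))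

/-- For `k` a positive integer, a spider `G = (S, K, R)` with nonempty head `R`
is not a minimal `(1,k)`-polar obstruction. -/
theorem stmt_12 {V : Type*} [Fintype V] (k : ℕ) (hk : 1 ≤ k) (G : SimpleGraph V)
    (S K R : Set V) (h : IsSpiderPartition G S K R) (hR : R.Nonempty) :
    ¬ MinOneKPolarObstruction k G :=
  stmt_12_general k hk G S K R h
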